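/- Let R be a commutative Noetherian ring, M a weakly Laskerian R-module, and N a finitely generated R-module. Then Tor^R_i(N, M) is weakly Laskerian for all i ≥ 0. -/

import Mathlib

/-!
Weakly Laskerian modules form a Serre class: they are closed under submodules, quotients and
extensions, the last because `Ass B ⊆ Ass A ∪ Ass (B ⧸ A)`. Hence `N ⊗ M`, a quotient of `Mⁿ`,
is weakly Laskerian. Higher `Tor` is handled by dimension shifting in `N`: over a Noetherian ring
there is a short exact sequence `0 → K → Rⁿ → N → 0` with `K` finitely generated, and since
`Tor_{i+1}(Rⁿ, M) = 0` the connecting map embeds `Tor_{i+1}(N, M)` into `Tor_i(K, M)`.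
-/

open CategoryTheory Opposite

universe u

/-- A module is weakly Laskerian if every quotient has finitely many associated primes. -/
def IsWeaklyLaskerian (R : Type u) [CommRing R] (M : Type u) [AddCommGroup M]
    [Module R M] : Prop :=
  ∀ N : Submodule R M, (associatedPrimes R (M ⧸ N)).Finite

namespace IsWeaklyLaskerian

variable {R : Type u} [CommRing R] {X Y Z : Type u} [AddCommGroup X] [Module R X]
  [AddCommGroup Y] [Module R Y] [AddCommGroup Z] [Module R Z]

theorem finite_associatedPrimes (h : IsWeaklyLaskerian R X) : (associatedPrimes R X).Finite :=
  LinearEquiv.AssociatedPrimes.eq ((⊥ : Submodule R X).quotEquivOfEqBot rfl) ▸ h ⊥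

theorem of_surjective (h : IsWeaklyLaskerian R X) (f : X →ₗ[R] Y) (hf : Function.Surjective f) :
    IsWeaklyLaskerian R Y := fun K =>
  LinearEquiv.AssociatedPrimes.eq
    ((K.mkQ ∘ₗ f).quotKerEquivOfSurjective (K.mkQ_surjective.comp hf)) ▸ h _

theorem of_linearEquiv (h : IsWeaklyLaskerian R X) (e : X ≃ₗ[R] Y) : IsWeaklyLaskerian R Y :=
  h.of_surjective e e.surjective

theorem of_injective (h : IsWeaklyLaskerian R Y) (f : X →ₗ[R] Y) (hf : Function.Injective f) :
    IsWeaklyLaskerian R X := by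
  intro K
  have hker : LinearMap.ker ((K.map f).mkQ ∘ₗ f) = K := by
    rw [LinearMap.ker_comp, Submodule.ker_mkQ, Submodule.comap_map_eq_of_injective hf]
  refine (h (K.map f)).subset (associatedPrimes.subset_of_injective (f := K.liftQ _ hker.ge) ?_)
  rw [← LinearMap.ker_eq_bot]
  exact K.ker_liftQ_eq_bot' _ hker.symm

theorem of_exact (hX : IsWeaklyLaskerian R X) (hZ : IsWeaklyLaskerian R Z) {f : X →ₗ[R] Y}
    {g : Y →ₗ[R] Z} (hf : Function.Injective f) (hg : Function.Surjective g)
    (hfg : Function.Exact f g) : IsWeaklyLaskerian R Y := by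
  intro K
  set A := (LinearMap.range f).map K.mkQ
  have hA : IsWeaklyLaskerian R A :=
    (hX.of_linearEquiv (LinearEquiv.ofInjective f hf)).of_surjective _
      (K.mkQ.submoduleMap_surjective _)
  have hQ : IsWeaklyLaskerian R ((Y ⧸ K) ⧸ A) :=
    ((hZ.of_linearEquiv (hfg.linearEquivOfSurjective hg).symm).of_surjective _
      (Submodule.factor_surjective le_sup_right)).of_linearEquiv
      (K.quotientQuotientEquivQuotientSup _).symm
  exact (hA.finite_associatedPrimes.union hQ.finite_associatedPrimes).subset
    (associatedPrimes.subset_union_of_exact A.injective_subtype (LinearMap.exact_subtype_mkQ A))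

theorem prod (hX : IsWeaklyLaskerian R X) (hY : IsWeaklyLaskerian R Y) :
    IsWeaklyLaskerian R (X × Y) :=
  hX.of_exact hY LinearMap.inl_injective LinearMap.snd_surjective .inl_snd

theorem pi_fin (h : IsWeaklyLaskerian R X) (n : ℕ) : IsWeaklyLaskerian R (Fin n → X) := by
  induction n with
  | zero => exact fun K =>
    associatedPrimes.eq_empty_of_subsingleton (R := R) (M := (Fin 0 → X) ⧸ K) ▸ Set.finite_empty
  | succ n ih => exact (h.prod ih).of_linearEquiv (Fin.consLinearEquiv R fun _ => X)

open TensorProduct in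
theorem tensorProduct_of_finite (h : IsWeaklyLaskerian R X) [Module.Finite R Y] :
    IsWeaklyLaskerian R (Y ⊗[R] X) := by
  obtain ⟨n, f, hf⟩ := Module.Finite.exists_fin' R Y
  exact ((h.pi_fin n).of_linearEquiv ((TensorProduct.piScalarRight R R X (Fin n)).symm.trans
    (TensorProduct.comm R X _))).of_surjective _ (LinearMap.rTensor_surjective X hf)

end IsWeaklyLaskerian

section Tor

open CategoryTheory.Limits MonoidalCategory

variable {R : Type u} [CommRing R]

noncomputable def torZeroIso (N M : ModuleCat.{u} R) :
    ((Tor (ModuleCat.{u} R) 0).obj N).obj M ≅ N ⊗ M :=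
  ((tensoringLeft _).obj N).leftDerivedZeroIsoSelf.app M

theorem isZero_Tor_succ_of_flat (F M : ModuleCat.{u} R) [Module.Flat R F] (n : ℕ) :
    IsZero (((Tor (ModuleCat.{u} R) (n + 1)).obj F).obj M) := by
  let P := projectiveResolution M
  refine ((HomologicalComplex.exactAt_iff_isZero_homology _ _).mp ?_).of_iso
    (P.isoLeftDerivedObj _ (n + 1))
  rw [HomologicalComplex.exactAt_iff' _ (n + 2) (n + 1) n (by simp) (by simp),
    ShortComplex.ShortExact.moduleCat_exact_iff_function_exact]
  exact Module.Flat.lTensor_exact F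
    ((ShortComplex.ShortExact.moduleCat_exact_iff_function_exact _).mp (P.exact_succ n))

/-- The short complex of complexes `S.X₁ ⊗ P ⟶ S.X₂ ⊗ P ⟶ S.X₃ ⊗ P`. -/
noncomputable def CategoryTheory.ShortComplex.tensorComplex (S : ShortComplex (ModuleCat.{u} R))
    {ι : Type*} {c : ComplexShape ι} (P : HomologicalComplex (ModuleCat.{u} R) c) :
    ShortComplex (HomologicalComplex (ModuleCat.{u} R) c) where
  f := (NatTrans.mapHomologicalComplex ((tensoringLeft _).map S.f) c).app P
  g := (NatTrans.mapHomologicalComplex ((tensoringLeft _).map S.g) c).app P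
  zero := by
    rw [← NatTrans.comp_app, ← NatTrans.mapHomologicalComplex_comp, ← Functor.map_comp, S.zero,
      Functor.map_zero]
    rfl

theorem CategoryTheory.ShortComplex.ShortExact.tensorComplex {S : ShortComplex (ModuleCat.{u} R)}
    (hS : S.ShortExact) {ι : Type*} {c : ComplexShape ι}
    {P : HomologicalComplex (ModuleCat.{u} R) c} (hP : ∀ j, Module.Flat R (P.X j)) :
    (S.tensorComplex P).ShortExact := by
  rw [HomologicalComplex.shortExact_iff_degreewise_shortExact]
  intro j
  have := hP j
  apply ModuleCat.shortComplex_shortExact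
  · exact rTensor_exact (P.X j) ((ShortExact.moduleCat_exact_iff_function_exact _).mp hS.exact)
      hS.moduleCat_surjective_g
  · exact Module.Flat.rTensor_preserves_injective_linearMap _ hS.moduleCat_injective_f
  · exact LinearMap.rTensor_surjective _ hS.moduleCat_surjective_g

/-- `Tor` derives its second argument, so the long exact sequence in the first argument is
obtained by tensoring `S` with a projective resolution of `M`. -/
theorem CategoryTheory.ShortComplex.ShortExact.exists_injective_Tor_succ
    {S : ShortComplex (ModuleCat.{u} R)} (hS : S.ShortExact) [Module.Flat R S.X₂]
    (M : ModuleCat.{u} R) (n : ℕ) :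
    ∃ φ : ((Tor (ModuleCat.{u} R) (n + 1)).obj S.X₃).obj M →ₗ[R]
      ((Tor (ModuleCat.{u} R) n).obj S.X₁).obj M, Function.Injective φ := by
  let P := projectiveResolution M
  have hT := hS.tensorComplex (P := P.complex) fun j =>
    have := (IsProjective.iff_projective (P.complex.X j)).mpr (P.projective j)
    inferInstance
  have hrel : (ComplexShape.down ℕ).Rel (n + 1) n := rfl
  have : Mono (hT.δ (n + 1) n hrel) := (hT.homology_exact₃ (n + 1) n hrel).mono_g
    (((isZero_Tor_succ_of_flat S.X₂ M n).of_iso (P.isoLeftDerivedObj _ _).symm).eq_of_src _ _)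
  let e₃ := (P.isoLeftDerivedObj ((tensoringLeft _).obj S.X₃) (n + 1)).toLinearEquiv
  let e₁ := (P.isoLeftDerivedObj ((tensoringLeft _).obj S.X₁) n).toLinearEquiv
  exact ⟨e₁.symm.toLinearMap ∘ₗ (hT.δ (n + 1) n hrel).hom ∘ₗ e₃.toLinearMap,
    e₁.symm.injective.comp (((ModuleCat.mono_iff_injective _).mp this).comp e₃.injective)⟩

end Tor

theorem isWeaklyLaskerian_tor (R : Type u) [CommRing R] [IsNoetherianRing R]
    (M N : Type u) [AddCommGroup M] [Module R M] [AddCommGroup N] [Module R N]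
    (hM : IsWeaklyLaskerian R M) [Module.Finite R N] (i : ℕ) :
    IsWeaklyLaskerian R
      (((Tor (ModuleCat.{u} R) i).obj (ModuleCat.of R N)).obj (ModuleCat.of R M)) := by
  induction i generalizing N with
  | zero =>
    exact (hM.tensorProduct_of_finite (Y := N)).of_linearEquiv
      (torZeroIso (.of R N) (.of R M)).symm.toLinearEquiv
  | succ i ih =>
    obtain ⟨n, f, hf⟩ := Module.Finite.exists_fin' R N
    obtain ⟨φ, hφ⟩ :=
      (LinearMap.shortExact_shortComplexKer hf).exists_injective_Tor_succ (ModuleCat.of R M) i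
    exact (ih (LinearMap.ker f)).of_injective φ hφ
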